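/- Let n be a nonempty finite type with decidable equality, let ρ : Matrix n n ℂ be positive semidefinite with positive semidefinite square root ρ^{1/2}, and let P : Matrix n n ℂ be a Hermitian idempotent (Pᴴ = P and P * P = P) whose column space equals that of ρ (LinearMap.range of the linear map induced by P equals LinearMap.range of the linear map induced by ρ). Then the set { m : Matrix n n ℂ | ∃ a, m = a * ρ^{1/2} } equals the set { m : Matrix n n ℂ | m * P = m }. (This identifies the image of the GNS isometry V : a|ω⟩ ↦ a√ρ inside ℋ ⊗ ℋ* with ℋ ⊗ Pℋ*, where P is the projection onto the support of ρ.) -/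

import Mathlib

open Matrix ComplexOrder

/-!
Since `√ρ` is Hermitian, `m = a √ρ` for some `a` exactly when the column space of `mᴴ` lies
in that of `√ρ`. A rank count (`rank (S Sᴴ) = rank S` for every `S`) shows that `√ρ` and `ρ = √ρ √ρᴴ`
have the same column space, which is that of `P`. Finally, for an idempotent `P` the
column space of `mᴴ` lies in that of `P` iff `P mᴴ = mᴴ`, i.e. `m P = m` since `P` is Hermitian.
-/

/-- The square root of a positive semidefinite matrix (the definition removed from Mathlib,
restated verbatim). -/
noncomputable def Matrix.PosSemidef.sqrt {n : Type*} [Fintype n] [DecidableEq n]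
    {A : Matrix n n ℂ} (hA : A.PosSemidef) : Matrix n n ℂ :=
  hA.1.eigenvectorUnitary.1 * diagonal ((↑) ∘ (√·) ∘ hA.1.eigenvalues) *
    (star hA.1.eigenvectorUnitary : Matrix n n ℂ)

theorem LinearMap.range_le_range_iff_exists_comp_eq {R M N P : Type*} [Semiring R]
    [AddCommMonoid M] [AddCommMonoid N] [AddCommMonoid P] [Module R M] [Module R N] [Module R P]
    [Module.Projective R P] {f : M →ₗ[R] N} {g : P →ₗ[R] N} :
    range g ≤ range f ↔ ∃ h : P →ₗ[R] M, f ∘ₗ h = g := by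
  refine ⟨fun hle => ?_, fun ⟨h, hh⟩ => hh ▸ range_comp_le_range h f⟩
  obtain ⟨h, hh⟩ := Module.projective_lifting_property f.rangeRestrict
    (g.codRestrict _ fun x => hle ⟨x, rfl⟩) f.surjective_rangeRestrict
  exact ⟨h, ext fun x => Subtype.ext_iff.mp (LinearMap.congr_fun hh x)⟩

namespace Matrix

section Field

variable {K m n l : Type*} [Field K]

theorem range_mulVecLin_le_iff_exists_eq_mul [Fintype n] [Fintype l] {A : Matrix m n K}
    {B : Matrix m l K} :
    LinearMap.range A.mulVecLin ≤ LinearMap.range B.mulVecLin ↔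
      ∃ C : Matrix l n K, A = B * C := by
  classical
  rw [LinearMap.range_le_range_iff_exists_comp_eq]
  refine ⟨fun ⟨h, hh⟩ => ⟨LinearMap.toMatrix' h, ?_⟩, fun ⟨C, hC⟩ => ⟨C.mulVecLin, ?_⟩⟩
  · apply toLin'.injective
    rw [toLin'_apply', toLin'_apply', mulVecLin_mul, ← toLin'_apply' (LinearMap.toMatrix' h),
      toLin'_toMatrix', hh]
  · rw [hC, mulVecLin_mul]

theorem mul_eq_self_iff_range_mulVecLin_le [Fintype m] [Fintype n] {P : Matrix m m K}
    (hP : P * P = P) (A : Matrix m n K) :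
    P * A = A ↔ LinearMap.range A.mulVecLin ≤ LinearMap.range P.mulVecLin := by
  rw [range_mulVecLin_le_iff_exists_eq_mul]
  refine ⟨fun h => ⟨A, h.symm⟩, fun ⟨C, hC⟩ => ?_⟩
  rw [hC, ← Matrix.mul_assoc, hP]

theorem exists_eq_mul_iff_range_conjTranspose_le [Fintype m] [Fintype l] [StarRing K]
    {A : Matrix m n K} {B : Matrix l n K} :
    (∃ C : Matrix m l K, A = C * B) ↔
      LinearMap.range Aᴴ.mulVecLin ≤ LinearMap.range Bᴴ.mulVecLin := by
  rw [range_mulVecLin_le_iff_exists_eq_mul]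
  constructor
  · rintro ⟨C, rfl⟩
    exact ⟨Cᴴ, conjTranspose_mul C B⟩
  · rintro ⟨D, hD⟩
    exact ⟨Dᴴ, conjTranspose_inj.mp (by rw [hD, conjTranspose_mul, conjTranspose_conjTranspose])⟩

theorem range_mulVecLin_self_mul_conjTranspose [Fintype m] [Fintype n] [PartialOrder K]
    [StarRing K] [StarOrderedRing K] (A : Matrix m n K) :
    LinearMap.range (A * Aᴴ).mulVecLin = LinearMap.range A.mulVecLin :=
  Submodule.eq_of_le_of_finrank_eq
    (by rw [mulVecLin_mul]; exact LinearMap.range_comp_le_range _ _)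
    (rank_self_mul_conjTranspose A)

end Field

namespace PosSemidef

variable {n : Type*} [Fintype n] [DecidableEq n] {A : Matrix n n ℂ}

theorem posSemidef_sqrt (hA : A.PosSemidef) : hA.sqrt.PosSemidef := by
  unfold Matrix.PosSemidef.sqrt
  rw [star_eq_conjTranspose]
  refine (posSemidef_diagonal_iff.mpr fun i => ?_).mul_mul_conjTranspose_same _
  simp only [Function.comp_apply]
  exact_mod_cast Real.sqrt_nonneg _

theorem sqrt_mul_self (hA : A.PosSemidef) : hA.sqrt * hA.sqrt = A := by
  have hsqrt : hA.sqrt = Unitary.conjStarAlgAut ℂ _ hA.1.eigenvectorUnitary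
      (diagonal ((↑) ∘ (√·) ∘ hA.1.eigenvalues)) := rfl
  rw [hsqrt, ← map_mul, diagonal_mul_diagonal]
  conv_rhs => rw [hA.1.spectral_theorem]
  congr 2
  funext i
  simp [← Complex.ofReal_mul, Real.mul_self_sqrt (hA.eigenvalues_nonneg i)]

theorem range_mulVecLin_sqrt (hA : A.PosSemidef) :
    LinearMap.range hA.sqrt.mulVecLin = LinearMap.range A.mulVecLin := by
  have h := range_mulVecLin_self_mul_conjTranspose hA.sqrt
  rw [hA.posSemidef_sqrt.isHermitian.eq, hA.sqrt_mul_self] at h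
  exact h.symm

end PosSemidef

end Matrix

theorem gns_image_eq_support_general
    (n : Type*) [Fintype n] [DecidableEq n]
    (ρ : Matrix n n ℂ) (hρ : ρ.PosSemidef)
    (P : Matrix n n ℂ) (hP1 : Pᴴ = P) (hP2 : P * P = P)
    (hPrange : LinearMap.range P.mulVecLin = LinearMap.range ρ.mulVecLin) :
    { m : Matrix n n ℂ | ∃ a, m = a * hρ.sqrt } =
      { m : Matrix n n ℂ | m * P = m } := by
  ext m
  calc (∃ a, m = a * hρ.sqrt)
      ↔ LinearMap.range mᴴ.mulVecLin ≤ LinearMap.range hρ.sqrtᴴ.mulVecLin :=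
        exists_eq_mul_iff_range_conjTranspose_le
    _ ↔ LinearMap.range mᴴ.mulVecLin ≤ LinearMap.range P.mulVecLin := by
        rw [hρ.posSemidef_sqrt.isHermitian.eq, hρ.range_mulVecLin_sqrt, hPrange]
    _ ↔ P * mᴴ = mᴴ := (mul_eq_self_iff_range_mulVecLin_le hP2 mᴴ).symm
    _ ↔ m * P = m := by rw [← conjTranspose_inj (A := m * P), conjTranspose_mul, hP1]

/-- The image of the GNS isometry `V : a|ω⟩ ↦ a√ρ` inside `ℋ ⊗ ℋ*` is
`ℋ ⊗ Pℋ*`: if `P` is the Hermitian idempotent whose column space equals the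
column space of `ρ`, then `{ a√ρ | a } = { m | m * P = m }`. -/
theorem gns_image_eq_support
    (n : Type*) [Fintype n] [DecidableEq n] [Nonempty n]
    (ρ : Matrix n n ℂ) (hρ : ρ.PosSemidef)
    (P : Matrix n n ℂ) (hP1 : Pᴴ = P) (hP2 : P * P = P)
    (hPrange : LinearMap.range P.mulVecLin = LinearMap.range ρ.mulVecLin) :
    { m : Matrix n n ℂ | ∃ a, m = a * hρ.sqrt } =
      { m : Matrix n n ℂ | m * P = m } :=
  gns_image_eq_support_general n ρ hρ P hP1 hP2 hPrange
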